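/- Combining the Young step and the biquadratic root: for all real φ, w, V with V ≥ 0 and ε > 0, setting b := (1/2)|w|, c := |φ| + V + (ε²/2)|w|, and v := √((2/3)(b + √(b² + 3c))), we have φ - (3/4)v⁴ - ε v w ≤ -V. -/
import Mathlib

theorem buckmaster_controller_decay
    (φ w V ε : ℝ) (hV : 0 ≤ V) (hε : 0 < ε)
    (b c v : ℝ)
    (hb : b = (1/2) * |w|)
    (hc : c = |φ| + V + (ε^2/2) * |w|)
    (hv : v = Real.sqrt ((2/3) * (b + Real.sqrt (b^2 + 3*c)))) :
    φ - (3/4) * v^4 - ε * v * w ≤ -V := by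
  have hw : 0 ≤ |w| := abs_nonneg w
  have hb0 : 0 ≤ b := by rw [hb]; positivity
  have hc0 : 0 ≤ c := by
    rw [hc]; have := abs_nonneg φ; positivity
  set s := Real.sqrt (b^2 + 3*c) with hs
  have hs0 : 0 ≤ s := Real.sqrt_nonneg _
  have hs2 : s^2 = b^2 + 3*c := Real.sq_sqrt (by nlinarith)
  have hv0 : 0 ≤ v := by rw [hv]; exact Real.sqrt_nonneg _
  have hv2 : v^2 = (2/3) * (b + s) := by
    rw [hv]; exact Real.sq_sqrt (by nlinarith)
  have hφ : φ ≤ |φ| := le_abs_self φ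
  have hwv : -(ε * v * w) ≤ ε * v * |w| := by
    have := neg_abs_le (ε * v * w)
    calc -(ε * v * w) ≤ |ε * v * w| := neg_le_abs _
      _ = ε * v * |w| := by
        rw [abs_mul, abs_mul, abs_of_nonneg hε.le, abs_of_nonneg hv0]
  nlinarith [sq_nonneg (v - ε), mul_nonneg hw (sq_nonneg (v - ε)), sq_nonneg v, sq_nonneg s]
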